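/- Let α < β be real numbers with α + β > 0, let m : ℝ → ℝ be a C¹, positive, even function with m'(y) ≤ 0 for all y > 0, and let ε > 0. Suppose k₁ : (−ε, ε) → ℝ and w̃ : ℝ × (−ε, ε) → ℝ are such that w̃ is twice continuously differentiable in (y,t), k₁ is differentiable at t = 0, and for every t ∈ (−ε, ε): −∂²_y w̃(y,t) = k₁(t) m(y) w̃(y,t) for all y ∈ (α+t, β+t), w̃(α+t, t) = w̃(β+t, t) = 0, w̃(y,t) > 0 for y ∈ (α+t, β+t), and ∫_{α+t}^{β+t} w̃(y,t)² m(y) dy = 1. Then k₁'(0) ≥ 0, and the inequality is strict unless m is constant on (α, β). -/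

import Mathlib

/-!
Transport the eigenfunction at time `t` back to `(α, β)`: `u_t(s) = w̃(s + t, t)` solves
`-u'' = k₁(t) m(· + t) u` there. Green's identity against `w = w̃(·, 0)` gives
`k₁(t) ∫ m(s + t) u_t w = k₁(0) ∫ m(s) u_t w`; differentiating at `t = 0`, the `∂ₜu` terms
cancel and the normalization leaves `k₁'(0) = -k₁(0) ∫_α^β m' w²`, with `k₁(0) > 0` because a
positive function vanishing at both ends is not convex.

If `α ≥ 0` then `m' ≤ 0` on `(α, β)`. Otherwise, as `m'` is odd, reflecting `(α, 0)` onto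
`(0, -α)` turns the integral into `∫_0^{-α} m'(x) (w(x)² - w(-x)²) dx + ∫_{-α}^β m' w²`, and
`w(-x) < w(x)` on `(0, -α]` by a Wronskian comparison of `w` with `x ↦ w(x) - w(-x)`, which
solves the same equation since `m` is even. Both integrands are nonpositive and vanish only where
`m' = 0`.
-/
open MeasureTheory Set Filter Topology Metric

theorem hasDerivAt_wronskian {f g : ℝ → ℝ} (hf : ContDiff ℝ 2 f) (hg : ContDiff ℝ 2 g) (x : ℝ) :
    HasDerivAt (fun y => deriv f y * g y - f y * deriv g y)
      (deriv (deriv f) x * g x - f x * deriv (deriv g) x) x := by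
  have h := ((hf.differentiable_deriv_two x).hasDerivAt.mul
      (hg.differentiable two_ne_zero x).hasDerivAt).sub
    ((hf.differentiable two_ne_zero x).hasDerivAt.mul (hg.differentiable_deriv_two x).hasDerivAt)
  exact h.congr_deriv (by ring)

theorem wronskian_eq_of_ode {f g M : ℝ → ℝ} {a b x y : ℝ} (hf : ContDiff ℝ 2 f)
    (hg : ContDiff ℝ 2 g) (hf_ode : ∀ z ∈ Ioo a b, deriv (deriv f) z = -(M z * f z))
    (hg_ode : ∀ z ∈ Ioo a b, deriv (deriv g) z = -(M z * g z))
    (hx : x ∈ Ioo a b) (hy : y ∈ Ioo a b) :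
    deriv f x * g x - f x * deriv g x = deriv f y * g y - f y * deriv g y := by
  refine isOpen_Ioo.is_const_of_deriv_eq_zero isPreconnected_Ioo
    (fun z _ => (hasDerivAt_wronskian hf hg z).differentiableAt.differentiableWithinAt)
    (fun z hz => ?_) hx hy
  rw [(hasDerivAt_wronskian hf hg z).deriv, hf_ode z hz, hg_ode z hz, Pi.zero_apply]
  ring

theorem integral_mul_mul_eq_of_dirichlet {u v P Q : ℝ → ℝ} {a b : ℝ} (hab : a ≤ b)
    (hu : ContDiff ℝ 2 u) (hv : ContDiff ℝ 2 v)
    (hP : ContinuousOn P (Icc a b)) (hQ : ContinuousOn Q (Icc a b))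
    (hu_ode : ∀ x ∈ Ioo a b, deriv (deriv u) x = -(P x * u x))
    (hv_ode : ∀ x ∈ Ioo a b, deriv (deriv v) x = -(Q x * v x))
    (hua : u a = 0) (hub : u b = 0) (hva : v a = 0) (hvb : v b = 0) :
    ∫ x in a..b, P x * u x * v x = ∫ x in a..b, Q x * u x * v x := by
  have huv : ContinuousOn (fun x => u x * v x) (Icc a b) :=
    (hu.continuous.mul hv.continuous).continuousOn
  have hPuv : IntervalIntegrable (fun x => P x * u x * v x) volume a b :=
    ((hP.mul huv).congr fun x _ => mul_assoc _ _ _).intervalIntegrable_of_Icc hab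
  have hQuv : IntervalIntegrable (fun x => Q x * u x * v x) volume a b :=
    ((hQ.mul huv).congr fun x _ => mul_assoc _ _ _).intervalIntegrable_of_Icc hab
  have hcongr : EqOn (fun x => deriv (deriv u) x * v x - u x * deriv (deriv v) x)
      (fun x => Q x * u x * v x - P x * u x * v x) (uIcc a b) := by
    intro x hx
    rw [uIcc_of_le hab] at hx
    rcases eq_endpoints_or_mem_Ioo_of_mem_Icc hx with rfl | rfl | hx
    · simp [hua, hva]
    · simp [hub, hvb]
    · simp only [hu_ode x hx, hv_ode x hx]
      ring
  have hu'' : Continuous (deriv (deriv u)) := hu.deriv'.continuous_deriv le_rfl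
  have hv'' : Continuous (deriv (deriv v)) := hv.deriv'.continuous_deriv le_rfl
  have hFTC := intervalIntegral.integral_eq_sub_of_hasDerivAt
    (fun x _ => hasDerivAt_wronskian hu hv x)
    (((hu''.mul hv.continuous).sub (hu.continuous.mul hv'')).intervalIntegrable a b)
  rw [intervalIntegral.integral_congr hcongr, intervalIntegral.integral_sub hQuv hPuv] at hFTC
  simp only [hua, hub, hva, hvb, mul_zero, zero_mul, sub_zero] at hFTC
  linarith

theorem pos_of_dirichlet_eigenvalue {w M : ℝ → ℝ} {a b k : ℝ} (hab : a < b)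
    (hw : ContDiff ℝ 2 w) (hM : ∀ x ∈ Ioo a b, 0 < M x)
    (hode : ∀ x ∈ Ioo a b, deriv (deriv w) x = -(k * M x * w x))
    (ha : w a = 0) (hb : w b = 0) (hpos : ∀ x ∈ Ioo a b, 0 < w x) : 0 < k := by
  by_contra! hk
  have hconv : ConvexOn ℝ (Icc a b) w := by
    refine convexOn_of_deriv2_nonneg (convex_Icc a b) hw.continuous.continuousOn
      (hw.differentiable two_ne_zero).differentiableOn
      hw.differentiable_deriv_two.differentiableOn fun x hx => ?_
    rw [interior_Icc] at hx
    rw [Function.iterate_succ_apply', Function.iterate_one, hode x hx]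
    nlinarith [mul_pos (hM x hx) (hpos x hx)]
  have hmid : (a + b) / 2 ∈ Ioo a b := ⟨by linarith, by linarith⟩
  have := hconv.le_max_of_mem_Icc (left_mem_Icc.2 hab.le) (right_mem_Icc.2 hab.le)
    (Ioo_subset_Icc_self hmid)
  rw [ha, hb, max_self] at this
  linarith [hpos _ hmid]

theorem deriv_deriv_comp_neg (f : ℝ → ℝ) (x : ℝ) :
    deriv (deriv fun y => f (-y)) x = deriv (deriv f) (-x) := by
  rw [show (deriv fun y => f (-y)) = fun y => -deriv f (-y) from
    funext fun y => deriv_comp_neg f y, deriv.fun_neg, deriv_comp_neg, neg_neg]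

theorem deriv_deriv_sub_comp_neg {f : ℝ → ℝ} (hf : ContDiff ℝ 2 f) (x : ℝ) :
    deriv (deriv fun y => f y - f (-y)) x = deriv (deriv f) x - deriv (deriv f) (-x) := by
  have hf_neg : ContDiff ℝ 2 fun y => f (-y) := hf.comp contDiff_neg
  rw [show (deriv fun y => f y - f (-y)) = fun y => deriv f y - deriv (fun y => f (-y)) y from
      funext fun y => deriv_fun_sub (hf.differentiable two_ne_zero y)
        (hf_neg.differentiable two_ne_zero y),
    deriv_fun_sub (hf.differentiable_deriv_two x) (hf_neg.differentiable_deriv_two x),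
    deriv_deriv_comp_neg]

theorem Function.Even.deriv {f : ℝ → ℝ} (hf : Function.Even f) : Function.Odd (deriv f) := by
  intro x
  simpa only [neg_neg, hf _] using deriv_comp_neg f (-x)

theorem Function.Odd.eqOn_zero_of_eqOn_Ioo {f : ℝ → ℝ} {b : ℝ} (hf : Function.Odd f)
    (h : EqOn f 0 (Ioo 0 b)) : EqOn f 0 (Ioo (-b) b) := by
  intro y hy
  rcases lt_trichotomy y 0 with hy0 | rfl | hy0
  · have hneg : f (-y) = 0 := h ⟨neg_pos.2 hy0, by linarith [hy.1]⟩
    simpa [hneg] using hf (-y)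
  · exact hf.map_zero
  · exact h ⟨hy0, hy.2⟩

/-- `d = w - w ∘ neg` solves the same equation on `(0, γ)`, so `(d / w)' = Wr(d, w) / w²` with a
constant Wronskian; as `d / w` runs from `0` to `1` on `[0, γ]`, it is strictly increasing. -/
theorem apply_neg_lt_of_ode_of_even {w M : ℝ → ℝ} {γ x : ℝ} (hw : ContDiff ℝ 2 w)
    (hM : Function.Even M) (hode : ∀ y ∈ Ioo (-γ) γ, deriv (deriv w) y = -(M y * w y))
    (hwγ : w (-γ) = 0) (hpos : ∀ y ∈ Icc 0 γ, 0 < w y) (hx : x ∈ Ioc 0 γ) : w (-x) < w x := by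
  have hγ : 0 < γ := hx.1.trans_le hx.2
  set d := fun y => w y - w (-y) with hd_def
  have hd : ContDiff ℝ 2 d := hw.sub (hw.comp contDiff_neg)
  have hd_ode : ∀ y ∈ Ioo 0 γ, deriv (deriv d) y = -(M y * d y) := fun y hy => by
    rw [deriv_deriv_sub_comp_neg hw, hode y ⟨by linarith [hy.1], hy.2⟩,
      hode (-y) ⟨neg_lt_neg hy.2, by linarith [hy.1]⟩, hM]
    ring
  have hw_ode : ∀ y ∈ Ioo 0 γ, deriv (deriv w) y = -(M y * w y) :=
    fun y hy => hode y ⟨by linarith [hy.1], hy.2⟩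
  set q := fun y => d y / w y with hq_def
  have hq : ∀ y ∈ Ioo 0 γ, HasDerivAt q
      ((deriv d y * w y - d y * deriv w y) / w y ^ 2) y := fun y hy =>
    ((hd.differentiable two_ne_zero y).hasDerivAt.div (hw.differentiable two_ne_zero y).hasDerivAt
      (hpos y (Ioo_subset_Icc_self hy)).ne')
  have hq_cont : ContinuousOn q (Icc 0 γ) :=
    hd.continuous.continuousOn.div hw.continuous.continuousOn fun y hy => (hpos y hy).ne'
  obtain ⟨ξ, hξ, hslope⟩ := exists_hasDerivAt_eq_slope q _ hγ hq_cont hq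
  have hq0 : q 0 = 0 := by simp [hq_def, hd_def]
  have hqγ : q γ = 1 := by simp [hq_def, hd_def, hwγ, (hpos γ ⟨hγ.le, le_rfl⟩).ne']
  have hwr : 0 < deriv d ξ * w ξ - d ξ * deriv w ξ := by
    rw [hq0, hqγ] at hslope
    have : 0 < (deriv d ξ * w ξ - d ξ * deriv w ξ) / w ξ ^ 2 := by
      rw [hslope, sub_zero, sub_zero]; exact one_div_pos.2 hγ
    exact (div_pos_iff_of_pos_right (pow_pos (hpos ξ (Ioo_subset_Icc_self hξ)) 2)).1 this
  have hmono : StrictMonoOn q (Icc 0 γ) := by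
    refine strictMonoOn_of_deriv_pos (convex_Icc 0 γ) hq_cont fun y hy => ?_
    rw [interior_Icc] at hy
    rw [(hq y hy).deriv, wronskian_eq_of_ode hd hw hd_ode hw_ode hy hξ]
    exact div_pos hwr (pow_pos (hpos y (Ioo_subset_Icc_self hy)) 2)
  have hqx : 0 < q x := hq0 ▸ hmono ⟨le_rfl, hγ.le⟩ (Ioc_subset_Icc_self hx) hx.1
  have := (div_pos_iff_of_pos_right (hpos x (Ioc_subset_Icc_self hx))).1 hqx
  simp only [hd_def] at this
  linarith

theorem integral_mul_nonpos {f g : ℝ → ℝ} {a b : ℝ} (hab : a ≤ b)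
    (hf : ∀ x ∈ Icc a b, f x ≤ 0) (hg : ∀ x ∈ Icc a b, 0 ≤ g x) :
    ∫ x in a..b, f x * g x ≤ 0 := by
  have := intervalIntegral.integral_nonneg (μ := volume) hab fun x hx =>
    neg_nonneg.2 (mul_nonpos_of_nonpos_of_nonneg (hf x hx) (hg x hx))
  rwa [intervalIntegral.integral_neg, neg_nonneg] at this

theorem eq_zero_of_integral_mul_eq_zero {f g : ℝ → ℝ} {a b x : ℝ} (hab : a < b)
    (hf : Continuous f) (hg : Continuous g)
    (hf0 : ∀ x ∈ Icc a b, f x ≤ 0) (hg0 : ∀ x ∈ Icc a b, 0 ≤ g x)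
    (h : ∫ x in a..b, f x * g x = 0) (hx : x ∈ Icc a b) (hgx : 0 < g x) : f x = 0 := by
  by_contra hne
  have hlt := intervalIntegral.integral_lt_integral_of_continuousOn_of_le_of_exists_lt hab
    (hf.mul hg).continuousOn continuousOn_const
    (fun y hy => mul_nonpos_of_nonpos_of_nonneg (hf0 y (Ioc_subset_Icc_self hy))
      (hg0 y (Ioc_subset_Icc_self hy)))
    ⟨x, hx, mul_neg_of_neg_of_pos ((hf0 x hx).lt_of_ne hne) hgx⟩
  simp only [intervalIntegral.integral_const, smul_eq_mul, mul_zero] at hlt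
  exact hlt.ne h

theorem integral_odd_mul {f g : ℝ → ℝ} {γ β : ℝ} (hf : Continuous f) (hg : Continuous g)
    (hodd : Function.Odd f) :
    ∫ x in -γ..β, f x * g x =
      (∫ x in 0..γ, f x * (g x - g (-x))) + ∫ x in γ..β, f x * g x := by
  have hfg : ∀ a b, IntervalIntegrable (fun x => f x * g x) volume a b :=
    (hf.mul hg).intervalIntegrable
  have hreflect : ∫ x in -γ..0, f x * g x = ∫ x in 0..γ, -(f x * g (-x)) := by
    have := intervalIntegral.integral_comp_neg (a := 0) (b := γ) fun x => f x * g x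
    simp only [neg_zero, hodd.eq, neg_mul] at this
    exact this.symm
  have hreflected : Continuous fun x => -(f x * g (-x)) := by fun_prop
  rw [← intervalIntegral.integral_add_adjacent_intervals (hfg (-γ) 0) (hfg 0 β),
    ← intervalIntegral.integral_add_adjacent_intervals (hfg 0 γ) (hfg γ β), hreflect,
    ← add_assoc, ← intervalIntegral.integral_add (hreflected.intervalIntegrable 0 γ) (hfg 0 γ)]
  congr 2
  ext x
  ring

theorem integral_deriv_mul_sq_nonpos_of_neg {m w : ℝ → ℝ} {β γ k : ℝ} (hγ : 0 < γ)
    (hγβ : γ < β) (hm : ContDiff ℝ 1 m) (hmeven : Function.Even m)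
    (hm' : ∀ y, 0 ≤ y → deriv m y ≤ 0) (hw : ContDiff ℝ 2 w)
    (hode : ∀ y ∈ Ioo (-γ) β, deriv (deriv w) y = -(k * m y * w y)) (hwγ : w (-γ) = 0)
    (hwpos : ∀ y ∈ Ioo (-γ) β, 0 < w y) :
    (∫ y in -γ..β, deriv m y * w y ^ 2) ≤ 0 ∧
      ((∫ y in -γ..β, deriv m y * w y ^ 2) = 0 → EqOn (deriv m) 0 (Ioo 0 β)) := by
  have hm'c : Continuous (deriv m) := hm.continuous_deriv le_rfl
  have hw2 : Continuous fun y => w y ^ 2 := hw.continuous.pow 2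
  have hwneg : ∀ x ∈ Icc 0 γ, 0 ≤ w (-x) := fun x hx =>
    hx.2.lt_or_eq.elim (fun h => (hwpos _ ⟨by linarith, by linarith [hx.1]⟩).le)
      fun h => h ▸ hwγ.ge
  have hreflect : ∀ x ∈ Ioc 0 γ, w (-x) ^ 2 < w x ^ 2 := fun x hx =>
    pow_lt_pow_left₀ (apply_neg_lt_of_ode_of_even (M := fun y => k * m y) hw
      (fun y => congrArg (k * ·) (hmeven y)) (fun y hy => hode y ⟨hy.1, hy.2.trans hγβ⟩) hwγ
      (fun y hy => hwpos y ⟨by linarith [hy.1], hy.2.trans_lt hγβ⟩) hx)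
      (hwneg x (Ioc_subset_Icc_self hx)) two_ne_zero
  have hg : Continuous fun x => w x ^ 2 - w (-x) ^ 2 := by fun_prop
  have hg0 : ∀ x ∈ Icc 0 γ, 0 ≤ w x ^ 2 - w (-x) ^ 2 := fun x hx =>
    hx.1.eq_or_lt.elim (fun h => by simp [← h]) fun h => sub_nonneg.2 (hreflect x ⟨h, hx.2⟩).le
  have hf₁ : ∀ x ∈ Icc 0 γ, deriv m x ≤ 0 := fun x hx => hm' x hx.1
  have hf₂ : ∀ x ∈ Icc γ β, deriv m x ≤ 0 := fun x hx => hm' x (hγ.le.trans hx.1)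
  rw [integral_odd_mul hm'c hw2 hmeven.deriv]
  have h₁ := integral_mul_nonpos hγ.le hf₁ hg0
  have h₂ := integral_mul_nonpos hγβ.le hf₂ fun x _ => sq_nonneg (w x)
  refine ⟨by linarith, fun h y hy => ?_⟩
  rcases lt_or_ge y γ with hyγ | hyγ
  · exact eq_zero_of_integral_mul_eq_zero hγ hm'c hg hf₁ hg0 (by linarith)
      ⟨hy.1.le, hyγ.le⟩ (sub_pos.2 (hreflect y ⟨hy.1, hyγ.le⟩))
  · exact eq_zero_of_integral_mul_eq_zero hγβ hm'c hw2 hf₂ (fun x _ => sq_nonneg (w x))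
      (by linarith) ⟨hyγ, hy.2.le⟩ (pow_pos (hwpos y ⟨by linarith, hy.2⟩) 2)

theorem integral_deriv_mul_sq_nonpos {m w : ℝ → ℝ} {α β k : ℝ} (hab : α < β)
    (hsum : 0 < α + β) (hm : ContDiff ℝ 1 m) (hmeven : Function.Even m)
    (hm' : ∀ y, 0 < y → deriv m y ≤ 0) (hw : ContDiff ℝ 2 w)
    (hode : ∀ y ∈ Ioo α β, deriv (deriv w) y = -(k * m y * w y)) (hwα : w α = 0)
    (hwpos : ∀ y ∈ Ioo α β, 0 < w y) :
    (∫ y in α..β, deriv m y * w y ^ 2) ≤ 0 ∧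
      ((∫ y in α..β, deriv m y * w y ^ 2) = 0 → EqOn (deriv m) 0 (Ioo α β)) := by
  have hm'le : ∀ y, 0 ≤ y → deriv m y ≤ 0 := fun y hy =>
    hy.eq_or_lt.elim (fun h => h ▸ hmeven.deriv.map_zero.le) (hm' y)
  rcases le_or_gt 0 α with hα | hα
  · have hf : ∀ y ∈ Icc α β, deriv m y ≤ 0 := fun y hy => hm'le y (hα.trans hy.1)
    exact ⟨integral_mul_nonpos hab.le hf fun y _ => sq_nonneg _, fun h y hy =>
      eq_zero_of_integral_mul_eq_zero hab (hm.continuous_deriv le_rfl) (hw.continuous.pow 2) hf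
        (fun y _ => sq_nonneg _) h (Ioo_subset_Icc_self hy) (pow_pos (hwpos y hy) 2)⟩
  obtain ⟨γ, rfl⟩ : ∃ γ, α = -γ := ⟨-α, (neg_neg α).symm⟩
  obtain ⟨hI, hI0⟩ := integral_deriv_mul_sq_nonpos_of_neg (neg_neg_iff_pos.1 hα) (by linarith) hm
    hmeven hm'le hw hode hwα hwpos
  exact ⟨hI, fun h => (hmeven.deriv.eqOn_zero_of_eqOn_Ioo (hI0 h)).mono
    (Ioo_subset_Ioo_left (by linarith))⟩

theorem hasDerivAt_intervalIntegral_of_continuousOn {F G : ℝ → ℝ → ℝ} {a b t₀ : ℝ}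
    {T : Set ℝ} (hab : a ≤ b) (hT : T ∈ 𝓝 t₀)
    (hF : ContinuousOn (fun p : ℝ × ℝ => F p.1 p.2) (Icc a b ×ˢ T))
    (hG : ContinuousOn (fun p : ℝ × ℝ => G p.1 p.2) (Icc a b ×ˢ T))
    (hFG : ∀ s ∈ Icc a b, ∀ t ∈ T, HasDerivAt (F s) (G s t) t) :
    IntervalIntegrable (G · t₀) volume a b ∧
      HasDerivAt (fun t => ∫ s in a..b, F s t) (∫ s in a..b, G s t₀) t₀ := by
  obtain ⟨δ, hδ, hball⟩ := nhds_basis_closedBall.mem_iff.1 hT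
  obtain ⟨C, hC⟩ := (isCompact_Icc.prod (isCompact_closedBall t₀ δ)).exists_bound_of_continuousOn
    (hG.mono (prod_mono subset_rfl hball))
  have hIoc : uIoc a b ⊆ Icc a b := by
    rw [uIoc_of_le hab]
    exact Ioc_subset_Icc_self
  have hslice : ∀ {H : ℝ → ℝ → ℝ}, ContinuousOn (fun p : ℝ × ℝ => H p.1 p.2) (Icc a b ×ˢ T) →
      ∀ t ∈ T, ContinuousOn (H · t) (Icc a b) := fun hH t ht =>
    hH.comp (continuousOn_id.prodMk continuousOn_const) fun s hs => ⟨hs, ht⟩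
  have ht₀ := mem_of_mem_nhds hT
  exact intervalIntegral.hasDerivAt_integral_of_dominated_loc_of_deriv_le
    (F := fun t s => F s t) (F' := fun t s => G s t) (bound := fun _ => C) (ball_mem_nhds t₀ hδ)
    (eventually_of_mem hT fun t ht =>
      ((hslice hF t ht).mono hIoc).aestronglyMeasurable measurableSet_uIoc)
    ((hslice hF t₀ ht₀).intervalIntegrable_of_Icc hab)
    (((hslice hG t₀ ht₀).mono hIoc).aestronglyMeasurable measurableSet_uIoc)
    (ae_of_all _ fun s hs t ht => hC (s, t) ⟨hIoc hs, ball_subset_closedBall ht⟩)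
    intervalIntegrable_const
    (ae_of_all _ fun s hs t ht => hFG s (hIoc hs) t (hball (ball_subset_closedBall ht)))

theorem deriv_deriv_comp_add_const (f : ℝ → ℝ) (a x : ℝ) :
    deriv (deriv fun y => f (y + a)) x = deriv (deriv f) (x + a) := by
  rw [show (deriv fun y => f (y + a)) = fun y => deriv f (y + a) from
    funext fun y => deriv_comp_add_const f a y, deriv_comp_add_const]

theorem ContDiffOn.contDiff_comp_shift {W : ℝ × ℝ → ℝ} {S : Set (ℝ × ℝ)} {n : WithTop ℕ∞}
    {t : ℝ} (hW : ContDiffOn ℝ n W S) (hS : IsOpen S) (ht : ∀ s, (s + t, t) ∈ S) :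
    ContDiff ℝ n fun s => W (s + t, t) :=
  contDiff_iff_contDiffAt.2 fun s =>
    (hW.contDiffAt (hS.mem_nhds (ht s))).comp s (by fun_prop)

theorem DifferentiableAt.hasDerivAt_comp_shift {W : ℝ × ℝ → ℝ} {s t : ℝ}
    (hW : DifferentiableAt ℝ W (s + t, t)) :
    HasDerivAt (fun τ => W (s + τ, τ)) (fderiv ℝ W (s + t, t) (1, 1)) t :=
  hW.hasFDerivAt.comp_hasDerivAt (f := fun τ => (s + τ, τ)) t
    (((hasDerivAt_id t).const_add s).prodMk (hasDerivAt_id t))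

theorem mul_integral_shift_eq {m k₁ : ℝ → ℝ} {W : ℝ × ℝ → ℝ} {α β ε t : ℝ} (hab : α ≤ β)
    (hm : Continuous m) (hW : ContDiffOn ℝ 2 W (univ ×ˢ Ioo (-ε) ε))
    (hode : ∀ t ∈ Ioo (-ε) ε, ∀ y ∈ Ioo (α + t) (β + t),
      deriv (deriv (fun s => W (s, t))) y = -(k₁ t * m y * W (y, t)))
    (hbc : ∀ t ∈ Ioo (-ε) ε, W (α + t, t) = 0 ∧ W (β + t, t) = 0) (ht : t ∈ Ioo (-ε) ε) :
    k₁ t * ∫ s in α..β, m (s + t) * (W (s + t, t) * W (s, 0)) =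
      k₁ 0 * ∫ s in α..β, m s * (W (s + t, t) * W (s, 0)) := by
  have h0 : (0 : ℝ) ∈ Ioo (-ε) ε := ⟨by linarith [ht.1, ht.2], by linarith [ht.1, ht.2]⟩
  have hsec : ∀ τ ∈ Ioo (-ε) ε, ContDiff ℝ 2 fun s => W (s + τ, τ) := fun τ hτ =>
    hW.contDiff_comp_shift (isOpen_univ.prod isOpen_Ioo) fun _ => ⟨trivial, hτ⟩
  have hsec_ode : ∀ τ ∈ Ioo (-ε) ε, ∀ s ∈ Ioo α β,
      deriv (deriv fun s => W (s + τ, τ)) s = -(k₁ τ * m (s + τ) * W (s + τ, τ)) :=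
    fun τ hτ s hs => by
      rw [deriv_deriv_comp_add_const (fun y => W (y, τ)),
        hode τ hτ _ ⟨by linarith [hs.1], by linarith [hs.2]⟩]
  have := integral_mul_mul_eq_of_dirichlet (P := fun s => k₁ t * m (s + t))
    (Q := fun s => k₁ 0 * m (s + 0)) hab (hsec t ht) (hsec 0 h0) (by fun_prop) (by fun_prop)
    (hsec_ode t ht) (hsec_ode 0 h0) (hbc t ht).1 (hbc t ht).2 (hbc 0 h0).1 (hbc 0 h0).2
  simpa only [add_zero, mul_assoc, intervalIntegral.integral_const_mul] using this

theorem exists_hasDerivAt_shift_integrals {m : ℝ → ℝ} {W : ℝ × ℝ → ℝ} {α β ε : ℝ}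
    (hab : α ≤ β) (hε : 0 < ε) (hm : ContDiff ℝ 1 m)
    (hW : ContDiffOn ℝ 2 W (univ ×ˢ Ioo (-ε) ε)) :
    ∃ D' N', HasDerivAt (fun t => ∫ s in α..β, m (s + t) * (W (s + t, t) * W (s, 0))) D' 0 ∧
      HasDerivAt (fun t => ∫ s in α..β, m s * (W (s + t, t) * W (s, 0))) N' 0 ∧
      D' - N' = ∫ s in α..β, deriv m s * W (s, 0) ^ 2 := by
  have hS : IsOpen (univ ×ˢ Ioo (-ε) ε : Set (ℝ × ℝ)) := isOpen_univ.prod isOpen_Ioo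
  have hT : Ioo (-ε) ε ∈ 𝓝 (0 : ℝ) := Ioo_mem_nhds (neg_neg_iff_pos.2 hε) hε
  have hmaps : MapsTo (fun p : ℝ × ℝ => (p.1 + p.2, p.2)) (Icc α β ×ˢ Ioo (-ε) ε)
      (univ ×ˢ Ioo (-ε) ε) := fun p hp => ⟨trivial, hp.2⟩
  have hWc : ContinuousOn (fun p : ℝ × ℝ => W (p.1 + p.2, p.2)) (Icc α β ×ˢ Ioo (-ε) ε) :=
    hW.continuousOn.comp (by fun_prop) hmaps
  have hW'c : ContinuousOn (fun p : ℝ × ℝ => fderiv ℝ W (p.1 + p.2, p.2) (1, 1))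
      (Icc α β ×ˢ Ioo (-ε) ε) :=
    ((hW.continuousOn_fderiv_of_isOpen hS one_le_two).comp (by fun_prop) hmaps).clm_apply
      continuousOn_const
  have hw : ContinuousOn (fun p : ℝ × ℝ => W (p.1, 0)) (Icc α β ×ˢ Ioo (-ε) ε) := by
    have := (hW.contDiff_comp_shift hS fun _ => ⟨trivial, mem_of_mem_nhds hT⟩).continuous
    simp only [add_zero] at this
    exact (this.comp continuous_fst).continuousOn
  have hm_fst : Continuous fun p : ℝ × ℝ => m p.1 := hm.continuous.comp continuous_fst
  have hm_add : Continuous fun p : ℝ × ℝ => m (p.1 + p.2) := hm.continuous.comp (by fun_prop)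
  have hm'_add : Continuous fun p : ℝ × ℝ => deriv m (p.1 + p.2) :=
    (hm.continuous_deriv le_rfl).comp (by fun_prop)
  have hshift : ∀ s, ∀ t ∈ Ioo (-ε) ε,
      HasDerivAt (fun τ => W (s + τ, τ)) (fderiv ℝ W (s + t, t) (1, 1)) t := fun s t ht =>
    ((hW.differentiableOn two_ne_zero).differentiableAt
      (hS.mem_nhds ⟨trivial, ht⟩)).hasDerivAt_comp_shift
  obtain ⟨hD'int, hD⟩ := hasDerivAt_intervalIntegral_of_continuousOn
    (F := fun s t => m (s + t) * (W (s + t, t) * W (s, 0)))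
    (G := fun s t => deriv m (s + t) * (W (s + t, t) * W (s, 0)) +
      m (s + t) * (fderiv ℝ W (s + t, t) (1, 1) * W (s, 0))) hab hT
    (hm_add.continuousOn.mul (hWc.mul hw))
    ((hm'_add.continuousOn.mul (hWc.mul hw)).add (hm_add.continuousOn.mul (hW'c.mul hw)))
    fun s _ t ht => ((hm.differentiable one_ne_zero (s + t)).hasDerivAt.comp_const_add s t).mul
      ((hshift s t ht).mul_const _)
  obtain ⟨hN'int, hN⟩ := hasDerivAt_intervalIntegral_of_continuousOn
    (F := fun s t => m s * (W (s + t, t) * W (s, 0)))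
    (G := fun s t => m s * (fderiv ℝ W (s + t, t) (1, 1) * W (s, 0))) hab hT
    (hm_fst.continuousOn.mul (hWc.mul hw)) (hm_fst.continuousOn.mul (hW'c.mul hw))
    fun s _ t ht => ((hshift s t ht).mul_const _).const_mul _
  refine ⟨_, _, hD, hN, ?_⟩
  rw [← intervalIntegral.integral_sub hD'int hN'int]
  congr 1
  ext s
  simp only [add_zero]
  ring

theorem deriv_eigenvalue_eq {m k₁ : ℝ → ℝ} {W : ℝ × ℝ → ℝ} {α β ε : ℝ} (hab : α ≤ β)
    (hε : 0 < ε) (hm : ContDiff ℝ 1 m) (hW : ContDiffOn ℝ 2 W (univ ×ˢ Ioo (-ε) ε))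
    (hk : DifferentiableAt ℝ k₁ 0)
    (hode : ∀ t ∈ Ioo (-ε) ε, ∀ y ∈ Ioo (α + t) (β + t),
      deriv (deriv (fun s => W (s, t))) y = -(k₁ t * m y * W (y, t)))
    (hbc : ∀ t ∈ Ioo (-ε) ε, W (α + t, t) = 0 ∧ W (β + t, t) = 0)
    (hnorm : ∫ y in α..β, W (y, 0) ^ 2 * m y = 1) :
    deriv k₁ 0 = -(k₁ 0 * ∫ y in α..β, deriv m y * W (y, 0) ^ 2) := by
  obtain ⟨D', N', hD, hN, hDN⟩ := exists_hasDerivAt_shift_integrals hab hε hm hW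
  have hkey : (fun t => k₁ t * (∫ s in α..β, m (s + t) * (W (s + t, t) * W (s, 0))) -
      k₁ 0 * ∫ s in α..β, m s * (W (s + t, t) * W (s, 0))) =ᶠ[𝓝 0] fun _ => 0 :=
    eventually_of_mem (Ioo_mem_nhds (neg_neg_iff_pos.2 hε) hε) fun t ht =>
      sub_eq_zero.2 (mul_integral_shift_eq hab hm.continuous hW hode hbc ht)
  have hderiv := ((hk.hasDerivAt.mul hD).sub (hN.const_mul (k₁ 0))).unique
    ((hasDerivAt_const 0 (0 : ℝ)).congr_of_eventuallyEq hkey)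
  have hD0 : ∫ s in α..β, m (s + 0) * (W (s + 0, 0) * W (s, 0)) = 1 := by
    rw [← hnorm]
    congr 1
    ext s
    simp only [add_zero]
    ring
  linear_combination hderiv - deriv k₁ 0 * hD0 - k₁ 0 * hDN

/-- Lemma 3.4 (ii): let `α < β` with `α + β > 0`, let `m` be a `C¹`, positive, even
function with `m' ≤ 0` on `(0,∞)`, and for `t ∈ (-ε,ε)` let `W(·,t)` be the
normalized positive first eigenfunction of the translated Dirichlet problem
`-∂²_y W = k₁(t) m W` in `(α+t, β+t)`, `W(α+t,t) = W(β+t,t) = 0`,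
`∫_{α+t}^{β+t} W(y,t)² m(y) dy = 1`. If `W` is twice continuously differentiable
in `(y,t)` and `k₁` is differentiable at `0`, then `k₁'(0) ≥ 0`, with strict
inequality unless `m` is constant on `(α,β)`. -/
theorem stmt_14 (α β : ℝ) (hab : α < β) (hsum : 0 < α + β)
    (m : ℝ → ℝ) (hm : ContDiff ℝ 1 m) (hmpos : ∀ y, 0 < m y)
    (hmeven : ∀ y, m (-y) = m y) (hm' : ∀ y : ℝ, 0 < y → deriv m y ≤ 0)
    (ε : ℝ) (hε : 0 < ε)
    (k₁ : ℝ → ℝ) (W : ℝ × ℝ → ℝ)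
    (hW : ContDiffOn ℝ 2 W (Set.univ ×ˢ Set.Ioo (-ε) ε))
    (hk : DifferentiableAt ℝ k₁ 0)
    (hode : ∀ t ∈ Set.Ioo (-ε) ε, ∀ y ∈ Set.Ioo (α + t) (β + t),
      deriv (deriv (fun s => W (s, t))) y = -(k₁ t * m y * W (y, t)))
    (hbc : ∀ t ∈ Set.Ioo (-ε) ε, W (α + t, t) = 0 ∧ W (β + t, t) = 0)
    (hWpos : ∀ t ∈ Set.Ioo (-ε) ε, ∀ y ∈ Set.Ioo (α + t) (β + t), 0 < W (y, t))
    (hnorm : ∀ t ∈ Set.Ioo (-ε) ε,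
      (∫ y in (α + t)..(β + t), (W (y, t)) ^ 2 * m y) = 1) :
    0 ≤ deriv k₁ 0 ∧
      ((¬ ∃ C : ℝ, ∀ y ∈ Set.Ioo α β, m y = C) → 0 < deriv k₁ 0) := by
  have h0 : (0 : ℝ) ∈ Ioo (-ε) ε := ⟨neg_neg_iff_pos.2 hε, hε⟩
  have hw : ContDiff ℝ 2 fun y => W (y, 0) := by
    simpa using hW.contDiff_comp_shift (isOpen_univ.prod isOpen_Ioo) fun _ => ⟨trivial, h0⟩
  have hw_ode : ∀ y ∈ Ioo α β, deriv (deriv fun s => W (s, 0)) y = -(k₁ 0 * m y * W (y, 0)) :=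
    fun y hy => hode 0 h0 y (by simpa using hy)
  have hwα : W (α, 0) = 0 := by simpa using (hbc 0 h0).1
  have hwβ : W (β, 0) = 0 := by simpa using (hbc 0 h0).2
  have hwpos : ∀ y ∈ Ioo α β, 0 < W (y, 0) := fun y hy => hWpos 0 h0 y (by simpa using hy)
  have hk0 : 0 < k₁ 0 :=
    pos_of_dirichlet_eigenvalue hab hw (fun y _ => hmpos y) hw_ode hwα hwβ hwpos
  have hformula := deriv_eigenvalue_eq hab.le hε hm hW hk hode hbc (by simpa using hnorm 0 h0)
  obtain ⟨hI, hI0⟩ := integral_deriv_mul_sq_nonpos hab hsum hm hmeven hm' hw hw_ode hwα hwpos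
  refine ⟨by rw [hformula]; nlinarith, fun hconst => ?_⟩
  rw [hformula, neg_pos]
  refine mul_neg_of_pos_of_neg hk0 (hI.lt_of_ne fun h => hconst ?_)
  exact isOpen_Ioo.exists_is_const_of_deriv_eq_zero isPreconnected_Ioo
    (hm.differentiable one_ne_zero).differentiableOn (hI0 h)
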